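/- Let k ≥ 1 and n ≥ 2 be integers, n' = n−1, m' = kn'+1, and m = kn+1. Let P' ∈ D_{m',n'} and let r be the rank of some vertex of P' with r < m' (the rank of the vertex reached after the first j steps of P' is b·m' − a·n', where b and a are the numbers of N and E steps among those j steps). Write P' = A·B as a concatenation, where the vertex of P' between A and B has rank r. Then the word P = N·B·A·E^k (one letter N, followed by B, followed by A, followed by k letters E) is an (m,n)-Dyck path, and area(P) = area(P') + k(n−1) − r. -/

import Mathlib

open scoped Classical

/-- Number of North steps (letters `true`) among the first `i` letters of `w`. -/
def upCount (w : List Bool) (i : ℕ) : ℕ := (w.take i).count true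

/-- Number of East steps (letters `false`) among the first `i` letters of `w`. -/
def rightCount (w : List Bool) (i : ℕ) : ℕ := (w.take i).count false

/-- `w` is an `(m,n)`-Dyck path: a word with `n` North letters (`true`) and `m` East
letters (`false`), each of whose prefixes with `b` North and `a` East letters
satisfies `b*m - a*n ≥ 0`. -/
def IsDyck (m n : ℕ) (w : List Bool) : Prop :=
  w.length = m + n ∧ w.count true = n ∧
  ∀ i, n * rightCount w i ≤ m * upCount w i

/-- The rank of the `(i+1)`-st step (0-indexed `i`) of `w`, namely `b*m - a*n` where
`b` and `a` are the numbers of North and East letters among the first `i` letters. -/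
def rank (m n : ℕ) (w : List Bool) (i : ℕ) : ℤ :=
  (m : ℤ) * upCount w i - (n : ℤ) * rightCount w i

/-- The sweep map: list the steps of `w` in increasing order of their ranks. -/
def sweep (m n : ℕ) (w : List Bool) : List Bool :=
  (((List.range w.length).mergeSort
      (fun i j => decide (rank m n w i ≤ rank m n w j))).map
    (fun i => w.getD i false))

/-- The word `EN(w)`: list the steps of `w` in increasing order of their end ranks
(the end rank of the `(i+1)`-st step is `rank w (i+1)`). -/
def sweepEN (m n : ℕ) (w : List Bool) : List Bool :=
  (((List.range w.length).mergeSort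
      (fun i j => decide (rank m n w (i + 1) ≤ rank m n w (j + 1)))).map
    (fun i => w.getD i false))

/-- One step of the filling algorithm: place entry `p.1` according to letter `p.2`
(`true` = S : start a new column; `false` = W : put it below the smallest active
entry, an active entry being the current bottom entry of a column of height `< k+1`). -/
def fillStep (k : ℕ) (cols : List (List ℕ)) (p : ℕ × Bool) : List (List ℕ) :=
  if p.2 then cols ++ [[p.1]]
  else
    match ((List.range cols.length).filter
        (fun j => (cols.getD j []).length < k + 1)).argmin
        (fun j => (cols.getD j []).getLastD 0) with
    | none => cols
    | some j => cols.set j ((cols.getD j []) ++ [p.1])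

/-- The state (list of columns, each recorded top to bottom) of the filling algorithm
after the entries `1, …, t` have been placed according to the first `t` letters of `w`. -/
def fillColsUpTo (k : ℕ) (w : List Bool) (t : ℕ) : List (List ℕ) :=
  ((List.range t).map (fun i => (i + 1, w.getD i false))).foldl (fillStep k) []

/-- The final state of the filling algorithm on the word `w` (entries
`1, …, m+n-1` placed, i.e. all letters but the last one processed). -/
def fillCols (k : ℕ) (w : List Bool) : List (List ℕ) :=
  fillColsUpTo k w (w.length - 1)

/-- The tableau `T(D)` produced by the filling algorithm, as a function
(row, column) ↦ entry, rows and columns 0-indexed. -/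
def fillTableau (k n : ℕ) (w : List Bool) : Fin (k + 1) → Fin n → ℕ :=
  fun i j => ((fillCols k w).getD j []).getD i 0

/-- `T` fills the `(k+1) × n` array with `1, …, (k+1)n`, increasing along rows and
columns. -/
def IsFilling (k n : ℕ) (T : Fin (k + 1) → Fin n → ℕ) : Prop :=
  (∀ i j, T i j ∈ Finset.Icc 1 ((k + 1) * n)) ∧
  Function.Injective (fun p : Fin (k + 1) × Fin n => T p.1 p.2) ∧
  (∀ i, StrictMono (T i)) ∧
  (∀ j, StrictMono (fun i => T i j))

/-- For all entries `a < b < c < d` of `T` with `d` directly below `a`, the entries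
`b` and `c` do not lie in the same column. -/
def NoBadQuadruple (k n : ℕ) (T : Fin (k + 1) → Fin n → ℕ) : Prop :=
  ∀ (i : Fin (k + 1)) (hi : (i : ℕ) + 1 < k + 1) (j : Fin n)
    (r r' : Fin (k + 1)) (c : Fin n), r < r' →
      ¬ (T i j < T r c ∧ T r c < T r' c ∧ T r' c < T ⟨(i : ℕ) + 1, hi⟩ j)

/-- The family `𝒯ₙᵏ` of tableaux. -/
def IsFussTableau (k n : ℕ) (T : Fin (k + 1) → Fin n → ℕ) : Prop :=
  IsFilling k n T ∧ NoBadQuadruple k n T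

/-- A value `r` is marked for `T` when `r - 1` is a bottom-row entry of `T`. -/
def Marked (k n : ℕ) (T : Fin (k + 1) → Fin n → ℕ) (r : ℕ) : Prop :=
  ∃ j : Fin n, T (Fin.last k) j + 1 = r

/-- One move of the walk `w(T)` on the values `1, …, M` (where `M = m + n`):
from a row-1 entry `x` move to `r + 1` where `r` is the bottom entry of the column
of `x`; from an entry `x` of one of the rows `2, …, k+1` move to the largest
unmarked value `≤ r`, where `r` is the entry directly above `x`; from `x = M`
move to the largest unmarked value `< M`. -/
noncomputable def walkStep (k n M : ℕ) (T : Fin (k + 1) → Fin n → ℕ) (x : ℕ) : ℕ :=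
  if h : ∃ j : Fin n, T 0 j = x then
    T (Fin.last k) (Classical.choose h) + 1
  else if h2 : ∃ p : Fin (k + 1) × Fin n, T p.1 p.2 = x then
    let p := Classical.choose h2
    ((((Finset.Icc 1 M).filter
        (fun y => y ≤ T (⟨(p.1 : ℕ) - 1, lt_of_le_of_lt (Nat.sub_le _ _) p.1.2⟩ : Fin (k + 1)) p.2
          ∧ ¬ Marked k n T y))).max).getD 0
  else
    ((((Finset.Icc 1 M).filter (fun y => y < M ∧ ¬ Marked k n T y))).max).getD 0

/-- The area of the path `w`: the number of lattice cells of the `m × n` rectangle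
lying below the path whose interiors lie entirely above the diagonal.
The cell in column `x` and row `y` (0-indexed) has its interior above the diagonal
iff `n*(x+1) ≤ m*y`, and lies below the path iff the `(y+1)`-st North step of `w`
occurs before the `(x+1)`-st East step. -/
def nthLetterIdx (w : List Bool) (b : Bool) (j : ℕ) : ℕ :=
  (((List.range w.length).filter (fun i => w.getD i false = b))).getD j 0

def area (m n : ℕ) (w : List Bool) : ℕ :=
  ((Finset.range m ×ˢ Finset.range n).filter
    (fun p => n * (p.1 + 1) ≤ m * p.2 ∧
      nthLetterIdx w true p.2 < nthLetterIdx w false p.1)).card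

/-- The reduction `red(T)`: delete column 1 and replace each remaining entry `i` by
`i` minus the number of column-1 entries smaller than `i`. -/
def red (k n : ℕ) (T : Fin (k + 1) → Fin n → ℕ) : Fin (k + 1) → Fin (n - 1) → ℕ :=
  fun i j =>
    let v := T i ⟨(j : ℕ) + 1, by have := j.2; omega⟩
    v - (Finset.univ.filter
      (fun u : Fin (k + 1) => T u ⟨0, by have := j.2; omega⟩ < v)).card

/-- The (finite) set of `(m,n)`-Dyck paths as a `Finset` of words. -/
noncomputable def dyckFinset (m n : ℕ) : Finset (List Bool) :=
  ((Finset.univ : Finset (Fin (m + n) → Bool)).image List.ofFn).filter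
    (fun w => IsDyck m n w)

/-!
Put `height m n w = m·#N(w) - n·#E(w)`, so that ranks are heights of prefixes. Since
`m n' - m' n = -1`, one has `n' · height m n w = n · height m' n' w - #N(w)`; hence a prefix of
`P` with at most `n` North steps has nonnegative `(m, n)`-height as soon as its
`(m', n')`-height is positive. Every nonempty prefix of `P = N·B·A·Eᵏ` has positive
`(m', n')`-height: the first `N` contributes `m'`, cutting `P'` at a vertex of rank `r < m'` and
swapping the pieces lowers the prefix heights by at most `r`, and the final `Eᵏ` lowers them by
at most `k n' = m' - 1`.

In row `y` of a Dyck path, the cells below the path and above the diagonal are those in columns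
`a_y ≤ x < ⌊m y / n⌋`, where `a_y` is the number of East steps before the `y`-th North step.
Summing over rows, `area w + eastNorthPairs w = ∑_{y < n} ⌊m y / n⌋`, and for `m = k n + 1` the
sum is `∑_{y < n} k y`. Swapping the pieces of `P' = A·B` raises `eastNorthPairs` by exactly the
rank `r` of the cut.
-/

theorem List.forall_take_append_iff {α : Type*} {p : List α → Prop} {u v : List α} :
    (∀ i, p ((u ++ v).take i)) ↔ (∀ i, p (u.take i)) ∧ ∀ i, p (u ++ v.take i) := by
  refine ⟨fun h => ⟨fun i => ?_, fun i => ?_⟩, fun ⟨hu, hv⟩ i => ?_⟩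
  · simpa [List.take_append_of_le_length (min_le_right i u.length), ← List.take_eq_take_min]
      using h (min i u.length)
  · simpa [List.take_length_add_append] using h (u.length + i)
  · rw [List.take_append]
    rcases le_or_gt i u.length with hi | hi
    · simpa [Nat.sub_eq_zero_of_le hi] using hu i
    · rw [List.take_of_length_le hi.le]
      exact hv _

namespace RationalDyck

variable {m n : ℕ}

def height (m n : ℕ) (w : List Bool) : ℤ := m * w.count true - n * w.count false

@[simp] theorem height_nil : height m n [] = 0 := by simp [height]

@[simp] theorem height_append (u v : List Bool) :
    height m n (u ++ v) = height m n u + height m n v := by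
  simp only [height, List.count_append]; push_cast; ring

@[simp] theorem height_cons_true (w : List Bool) : height m n (true :: w) = m + height m n w := by
  rw [height, height, List.count_cons_self, List.count_cons_of_ne Bool.false_ne_true.symm]
  push_cast
  ring

@[simp] theorem height_replicate_false (j : ℕ) :
    height m n (List.replicate j false) = -(n * j) := by
  simp [height, List.count_replicate]

theorem rank_eq_height (w : List Bool) (i : ℕ) : rank m n w i = height m n (w.take i) := rfl

theorem isDyck_iff {w : List Bool} :
    IsDyck m n w ↔
      w.length = m + n ∧ w.count true = n ∧ ∀ i, 0 ≤ height m n (w.take i) := by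
  simp only [IsDyck, height, rightCount, upCount, sub_nonneg]
  norm_cast

theorem _root_.IsDyck.count_false {w : List Bool} (hw : IsDyck m n w) : w.count false = m := by
  obtain ⟨hlength, hcount, -⟩ := hw
  have := List.count_true_add_count_false w
  omega

theorem _root_.IsDyck.height_eq_zero {w : List Bool} (hw : IsDyck m n w) : height m n w = 0 := by
  simp [height, hw.2.1, hw.count_false, mul_comm]

theorem drop_append_take_perm (w : List Bool) (j : ℕ) : (w.drop j ++ w.take j).Perm w :=
  List.perm_append_comm.trans (by rw [List.take_append_drop])

theorem neg_height_le_height_take_drop_append_take {w : List Bool}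
    (hw : ∀ i, 0 ≤ height m n (w.take i)) (j i : ℕ) :
    -height m n (w.take j) ≤ height m n ((w.drop j ++ w.take j).take i) := by
  have hsplit := congrArg (height m n) (List.take_add (l := w) (i := j) (j := i))
  rw [List.take_append, List.take_take, height_append]
  rw [height_append] at hsplit
  linarith [hw (j + i), hw (min (i - (w.drop j).length) j)]

theorem height_nonneg_of_height_pos {m' n' : ℕ} (hmn : m * n' + 1 = m' * n) (hn' : 0 < n')
    {w : List Bool} (hw : w.count true ≤ n) (hpos : 0 < height m' n' w) :
    0 ≤ height m n w := by
  have hmnZ : (m : ℤ) * n' + 1 = m' * n := by exact_mod_cast hmn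
  have htransfer : (n' : ℤ) * height m n w = n * height m' n' w - w.count true := by
    simp only [height]; linear_combination (w.count true : ℤ) * hmnZ
  have hcount : (w.count true : ℤ) ≤ n * height m' n' w := by
    have : (n : ℤ) * 1 ≤ n * height m' n' w := by gcongr; omega
    omega
  exact nonneg_of_mul_nonneg_right (a := (n' : ℤ)) (by linarith) (by exact_mod_cast hn')

theorem neg_le_height_take_drop_append_take_append_replicate {k n' : ℕ} {w : List Bool}
    (hw : IsDyck (k * n' + 1) n' w) {j : ℕ} (hj : height (k * n' + 1) n' (w.take j) ≤ k * n')
    (i : ℕ) :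
    -(k * n' : ℤ) ≤
      height (k * n' + 1) n' ((w.drop j ++ w.take j ++ List.replicate k false).take i) := by
  revert i
  refine List.forall_take_append_iff (p := fun l => -(k * n' : ℤ) ≤ height (k * n' + 1) n' l)
    |>.mpr ⟨fun i => ?_, fun i => ?_⟩
  · linarith [neg_height_le_height_take_drop_append_take (isDyck_iff.mp hw).2.2 j i]
  · have hrotation :
        height (k * n' + 1) n' (w.drop j) + height (k * n' + 1) n' (w.take j) = 0 := by
      rw [add_comm, ← height_append, List.take_append_drop, hw.height_eq_zero]
    have hmin : (n' : ℤ) * (min i k : ℕ) ≤ n' * k := by gcongr; omega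
    simp only [height_append, List.take_replicate, height_replicate_false]
    linarith

theorem isDyck_cons_drop_append_take_append_replicate {k n' : ℕ} (hn' : 0 < n')
    {w : List Bool} (hw : IsDyck (k * n' + 1) n' w) {j : ℕ}
    (hj : height (k * n' + 1) n' (w.take j) ≤ k * n') :
    IsDyck (k * (n' + 1) + 1) (n' + 1)
      (true :: (w.drop j ++ w.take j ++ List.replicate k false)) := by
  obtain ⟨hlen, hcount, -⟩ := isDyck_iff.mp hw
  have hperm := drop_append_take_perm w j
  have hcount' :
      (true :: (w.drop j ++ w.take j ++ List.replicate k false)).count true = n' + 1 := by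
    rw [List.count_cons, List.count_append, hperm.count_eq, hcount]
    simp [List.count_replicate]
  refine isDyck_iff.mpr ⟨?_, hcount', ?_⟩
  · simp only [List.length_cons, List.length_append, hperm.length_eq, hlen,
      List.length_replicate]
    ring
  rintro (_ | i)
  · simp
  rw [List.take_succ_cons]
  refine height_nonneg_of_height_pos (m' := k * n' + 1) (n' := n') (by ring) hn'
    (hcount' ▸ ((List.take_sublist _ _).cons_cons true).count_le true) ?_
  rw [height_cons_true]
  push_cast
  linarith [neg_le_height_take_drop_append_take_append_replicate hw hj i]

def letterPositions (w : List Bool) (b : Bool) : List ℕ :=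
  (List.range w.length).filter (fun i => w.getD i false = b)

theorem nthLetterIdx_eq_getD (w : List Bool) (b : Bool) (j : ℕ) :
    nthLetterIdx w b j = (letterPositions w b).getD j 0 := rfl

theorem letterPositions_cons (x b : Bool) (w : List Bool) :
    letterPositions (x :: w) b =
      (if x = b then [0] else []) ++ (letterPositions w b).map (· + 1) := by
  rw [letterPositions, List.length_cons, List.range_succ_eq_map, List.filter_cons, List.filter_map]
  by_cases h : x = b <;> simp [h, Function.comp_def, letterPositions]

theorem length_letterPositions (w : List Bool) (b : Bool) :
    (letterPositions w b).length = w.count b := by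
  induction w with
  | nil => rfl
  | cons x w ih =>
    rw [letterPositions_cons]
    by_cases h : x = b <;> simp [h, ih]

theorem nthLetterIdx_cons_self_zero (b : Bool) (w : List Bool) : nthLetterIdx (b :: w) b 0 = 0 := by
  simp [nthLetterIdx_eq_getD, letterPositions_cons]

theorem nthLetterIdx_cons_self_succ (b : Bool) {w : List Bool} {y : ℕ} (hy : y < w.count b) :
    nthLetterIdx (b :: w) b (y + 1) = nthLetterIdx w b y + 1 := by
  rw [← length_letterPositions] at hy
  simp [nthLetterIdx_eq_getD, letterPositions_cons, hy]

theorem nthLetterIdx_cons_of_ne {x b : Bool} (hx : x ≠ b) {w : List Bool} {y : ℕ}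
    (hy : y < w.count b) :
    nthLetterIdx (x :: w) b y = nthLetterIdx w b y + 1 := by
  rw [← length_letterPositions] at hy
  simp [nthLetterIdx_eq_getD, letterPositions_cons, hx, hy]

theorem count_take_nthLetterIdx {w : List Bool} {b : Bool} {y : ℕ} (hy : y < w.count b) :
    (w.take (nthLetterIdx w b y)).count b = y := by
  induction w generalizing y with
  | nil => simp at hy
  | cons x w ih =>
    by_cases hx : x = b
    · subst hx
      rcases y with _ | y
      · simp [nthLetterIdx_cons_self_zero]
      · simp only [List.count_cons_self, Nat.add_lt_add_iff_right] at hy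
        simp [nthLetterIdx_cons_self_succ x hy, ih hy]
    · simp only [List.count_cons, beq_iff_eq, hx, if_false, add_zero] at hy
      simp [nthLetterIdx_cons_of_ne hx hy, ih hy, hx]

theorem nthLetterIdx_true_lt_nthLetterIdx_false_iff {w : List Bool} {x y : ℕ}
    (hy : y < w.count true) (hx : x < w.count false) :
    nthLetterIdx w true y < nthLetterIdx w false x ↔
      rightCount w (nthLetterIdx w true y) ≤ x := by
  induction w generalizing x y with
  | nil => simp at hy
  | cons c w ih =>
    cases c with
    | true =>
      simp only [List.count_cons_self, List.count_cons_of_ne Bool.false_ne_true.symm] at hy hx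
      rw [nthLetterIdx_cons_of_ne (by decide) hx]
      rcases y with _ | y
      · simp [nthLetterIdx_cons_self_zero, rightCount]
      · rw [nthLetterIdx_cons_self_succ true (by omega)]
        simpa [rightCount] using ih (y := y) (by omega) hx
    | false =>
      simp only [List.count_cons_self, List.count_cons_of_ne Bool.false_ne_true] at hy hx
      rw [nthLetterIdx_cons_of_ne (by decide) hy]
      rcases x with _ | x
      · simp [nthLetterIdx_cons_self_zero, rightCount]
      · rw [nthLetterIdx_cons_self_succ false (by omega)]
        simpa [rightCount] using ih (x := x) hy (by omega)

def eastNorthPairs : List Bool → ℕ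
  | [] => 0
  | b :: w => (if b then 0 else w.count true) + eastNorthPairs w

theorem eastNorthPairs_append (u v : List Bool) :
    eastNorthPairs (u ++ v) =
      eastNorthPairs u + eastNorthPairs v + u.count false * v.count true := by
  induction u with
  | nil => simp [eastNorthPairs]
  | cons b u ih =>
    cases b
    · simp only [List.cons_append, eastNorthPairs, Bool.false_eq_true, ↓reduceIte,
        List.count_append, ih, List.count_cons_self]
      ring
    · simp [eastNorthPairs, ih]

theorem eastNorthPairs_replicate_false (j : ℕ) : eastNorthPairs (List.replicate j false) = 0 := by
  induction j with
  | zero => rfl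
  | succ j ih => simp [List.replicate_succ, eastNorthPairs, ih, List.count_replicate]

theorem sum_rightCount_nthLetterIdx (w : List Bool) :
    ∑ y ∈ Finset.range (w.count true), rightCount w (nthLetterIdx w true y) =
      eastNorthPairs w := by
  induction w with
  | nil => rfl
  | cons c w ih =>
    cases c with
    | true =>
      rw [List.count_cons_self, Finset.sum_range_succ', eastNorthPairs, ← ih]
      simp only [nthLetterIdx_cons_self_zero, rightCount, List.take_zero, List.count_nil,
        add_zero, if_true, zero_add]
      refine Finset.sum_congr rfl fun y hy => ?_
      rw [nthLetterIdx_cons_self_succ true (Finset.mem_range.mp hy)]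
      simp
    | false =>
      have hcount : (false :: w).count true = w.count true := by simp
      have hshift : ∀ y ∈ Finset.range (w.count true),
          rightCount (false :: w) (nthLetterIdx (false :: w) true y) =
            rightCount w (nthLetterIdx w true y) + 1 := fun y hy => by
        rw [nthLetterIdx_cons_of_ne Bool.false_ne_true (Finset.mem_range.mp hy)]
        simp [rightCount]
      rw [hcount, Finset.sum_congr rfl hshift, Finset.sum_add_distrib, ih, eastNorthPairs]
      simp [add_comm]

theorem rightCount_nthLetterIdx_le {w : List Bool} (hw : IsDyck m n w) (hn : 0 < n) {y : ℕ}
    (hy : y < n) : rightCount w (nthLetterIdx w true y) ≤ m * y / n := by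
  have hdyck := hw.2.2 (nthLetterIdx w true y)
  rw [upCount, count_take_nthLetterIdx (hw.2.1 ▸ hy)] at hdyck
  rw [Nat.le_div_iff_mul_le hn, mul_comm]
  exact hdyck

theorem area_row_eq_Ico {w : List Bool} (hw : IsDyck m n w) (hn : 0 < n) {y : ℕ} (hy : y < n) :
    (Finset.range m).filter (fun x => n * (x + 1) ≤ m * y ∧
        nthLetterIdx w true y < nthLetterIdx w false x) =
      Finset.Ico (rightCount w (nthLetterIdx w true y)) (m * y / n) := by
  have hdiv : m * y / n ≤ m := Nat.div_le_of_le_mul (by rw [mul_comm n]; gcongr)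
  ext x
  have hdiag : n * (x + 1) ≤ m * y ↔ x < m * y / n := by
    rw [Nat.lt_iff_add_one_le, Nat.le_div_iff_mul_le hn, mul_comm n]
  have hpath (hx : x < m) := nthLetterIdx_true_lt_nthLetterIdx_false_iff (hw.2.1 ▸ hy)
    (hw.count_false ▸ hx)
  rw [Finset.mem_filter, Finset.mem_range, Finset.mem_Ico, hdiag]
  constructor
  · rintro ⟨hx, hxy, hlt⟩
    exact ⟨(hpath hx).mp hlt, hxy⟩
  · rintro ⟨hle, hxy⟩
    have hx : x < m := hxy.trans_le hdiv
    exact ⟨hx, hxy, (hpath hx).mpr hle⟩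

theorem area_add_eastNorthPairs {w : List Bool} (hw : IsDyck m n w) (hn : 0 < n) :
    area m n w + eastNorthPairs w = ∑ y ∈ Finset.range n, m * y / n := by
  rw [area, Finset.card_filter, Finset.sum_product_right, ← sum_rightCount_nthLetterIdx, hw.2.1,
    ← Finset.sum_add_distrib]
  refine Finset.sum_congr rfl fun y hy => ?_
  rw [Finset.mem_range] at hy
  rw [← Finset.card_filter, area_row_eq_Ico hw hn hy, Nat.card_Ico,
    Nat.sub_add_cancel (rightCount_nthLetterIdx_le hw hn hy)]

theorem eastNorthPairs_drop_append_take (w : List Bool) (j : ℕ) :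
    (eastNorthPairs (w.drop j ++ w.take j) : ℤ) =
      eastNorthPairs w + height (w.count false) (w.count true) (w.take j) := by
  have hcount (b : Bool) : w.count b = (w.take j).count b + (w.drop j).count b := by
    rw [← List.count_append, List.take_append_drop]
  have hsplit := eastNorthPairs_append (w.take j) (w.drop j)
  rw [List.take_append_drop] at hsplit
  simp only [eastNorthPairs_append, height, hsplit, hcount]
  push_cast
  ring

theorem eastNorthPairs_cons_true_append_replicate_false (w : List Bool) (k : ℕ) :
    eastNorthPairs (true :: (w ++ List.replicate k false)) = eastNorthPairs w := by
  simp [eastNorthPairs, eastNorthPairs_append, eastNorthPairs_replicate_false, List.count_replicate]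

theorem sum_range_mul_add_one_mul_div (k n : ℕ) :
    ∑ y ∈ Finset.range n, (k * n + 1) * y / n = ∑ y ∈ Finset.range n, k * y := by
  refine Finset.sum_congr rfl fun y hy => ?_
  have hy : y < n := Finset.mem_range.mp hy
  rw [show (k * n + 1) * y = y + k * y * n by ring, Nat.add_mul_div_right _ _ (by omega),
    Nat.div_eq_of_lt hy, zero_add]

end RationalDyck

open RationalDyck in
theorem statement18_general (k n : ℕ) (hn : 2 ≤ n)
    (n' m' m : ℕ) (hn' : n' = n - 1) (hm' : m' = k * n' + 1) (hm : m = k * n + 1)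
    (P' : List Bool) (hP' : IsDyck m' n' P')
    (jcut : ℕ)
    (r : ℕ) (hr : (r : ℤ) = rank m' n' P' jcut) (hrm : r < m')
    (A B : List Bool) (hA : A = P'.take jcut) (hB : B = P'.drop jcut)
    (P : List Bool) (hP : P = [true] ++ B ++ A ++ List.replicate k false) :
    IsDyck m n P ∧ area m n P + r = area m' n' P' + k * (n - 1) := by
  obtain rfl : n = n' + 1 := by omega
  subst hm hm' hA hB
  obtain rfl : P = true :: (P'.drop jcut ++ P'.take jcut ++ List.replicate k false) := hP
  rw [rank_eq_height] at hr
  have hPdyck : IsDyck (k * (n' + 1) + 1) (n' + 1)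
      (true :: (P'.drop jcut ++ P'.take jcut ++ List.replicate k false)) :=
    isDyck_cons_drop_append_take_append_replicate (by omega) hP' (by omega)
  refine ⟨hPdyck, ?_⟩
  have hareaP := area_add_eastNorthPairs hPdyck (by omega)
  have hareaP' := area_add_eastNorthPairs hP' (by omega)
  have hrotation := eastNorthPairs_drop_append_take P' jcut
  rw [hP'.count_false, hP'.2.1, ← hr] at hrotation
  rw [eastNorthPairs_cons_true_append_replicate_false, sum_range_mul_add_one_mul_div,
    Finset.sum_range_succ] at hareaP
  rw [sum_range_mul_add_one_mul_div] at hareaP'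
  rw [Nat.add_sub_cancel]
  omega

/-- For `k ≥ 1`, `n ≥ 2`, `n' = n-1`, `m' = kn'+1`, `m = kn+1`:
if `P' ∈ 𝒟_{m',n'}` is cut as `P' = A ⬝ B` at a vertex of rank `r < m'`, then
`P = N ⬝ B ⬝ A ⬝ Eᵏ` is an `(m,n)`-Dyck path and
`area(P) = area(P') + k(n-1) - r`. -/
theorem statement18 (k n : ℕ) (hk : 1 ≤ k) (hn : 2 ≤ n)
    (n' m' m : ℕ) (hn' : n' = n - 1) (hm' : m' = k * n' + 1) (hm : m = k * n + 1)
    (P' : List Bool) (hP' : IsDyck m' n' P')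
    (jcut : ℕ) (hjcut : jcut ≤ m' + n')
    (r : ℕ) (hr : (r : ℤ) = rank m' n' P' jcut) (hrm : r < m')
    (A B : List Bool) (hA : A = P'.take jcut) (hB : B = P'.drop jcut)
    (P : List Bool) (hP : P = [true] ++ B ++ A ++ List.replicate k false) :
    IsDyck m n P ∧ area m n P + r = area m' n' P' + k * (n - 1) :=
  statement18_general k n hn n' m' m hn' hm' hm P' hP' jcut r hr hrm A B hA hB P hP
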